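/- arXiv:2410.01537 — 2 statements merged into one kernel-verified Lean document; each statement's English description precedes it below -/
import Mathlib

section
/- Assume d ≥ 1, L ≥ 1, γ > 0, λ > 0. There exists ᾱ > 0 such that for every step size α with 0 < α ≤ ᾱ, the PGD map g_α is injective on [−1, 1]². -/
open MeasureTheory ProbabilityTheory Real Filter

noncomputable def erf (u : ℝ) : ℝ := 2 / Real.sqrt Real.pi * ∫ r in (0:ℝ)..u, Real.exp (-r ^ 2)

noncomputable def zeta (t s : ℝ) : ℝ := ∫ g, erf (t + g) ^ 2 ∂(gaussianReal 0 s.toNNReal)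

/-- The reduced risk `R(κ, ν)` on the invariant manifold. -/
noncomputable def Rred (d L : ℕ) (γ lam ε : ℝ) (κ ν : ℝ) : ℝ :=
  γ ^ 2 - 2 * γ ^ 2 * ν * erf (lam * Real.sqrt ((d : ℝ) / 2) * κ /
      Real.sqrt (1 + 2 * lam ^ 2 * γ ^ 2))
    + γ ^ 2 * zeta (lam * Real.sqrt ((d : ℝ) / 2) * κ) (lam ^ 2 * γ ^ 2)
    + ((L : ℝ) - 1) * zeta 0 (lam ^ 2) + ε ^ 2

/-- Partial derivative `∂κR` of the reduced risk with respect to its first argument. -/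
noncomputable def dkR (d L : ℕ) (γ lam ε : ℝ) (κ ν : ℝ) : ℝ :=
  deriv (fun x => Rred d L γ lam ε x ν) κ

/-- Partial derivative `∂νR` of the reduced risk with respect to its second argument. -/
noncomputable def dvR (d L : ℕ) (γ lam ε : ℝ) (κ ν : ℝ) : ℝ :=
  deriv (fun y => Rred d L γ lam ε κ y) ν

/-- The PGD map `g_α`. -/
noncomputable def pgd (d L : ℕ) (γ lam ε α : ℝ) (p : ℝ × ℝ) : ℝ × ℝ :=
  ((p.1 - α * dkR d L γ lam ε p.1 p.2 * (1 - p.1 ^ 2)) /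
      Real.sqrt (1 + α ^ 2 * (dkR d L γ lam ε p.1 p.2) ^ 2 * (1 - p.1 ^ 2)),
   (p.2 - α * dvR d L γ lam ε p.1 p.2 * (1 - p.2 ^ 2)) /
      Real.sqrt (1 + α ^ 2 * (dvR d L γ lam ε p.1 p.2) ^ 2 * (1 - p.2 ^ 2)))

/-- The square `[−1, 1]²`. -/
def sqIcc : Set (ℝ × ℝ) := {p | p.1 ∈ Set.Icc (-1 : ℝ) 1 ∧ p.2 ∈ Set.Icc (-1 : ℝ) 1}

open Set

/-!
Writing a coordinate as `x = cos θ`, a step of signed size `a` just rotates the angle: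
`pgdCoord (cos θ) a = cos (θ + arctan (a sin θ))`. For `|a| ≤ 1/2` the new angle stays in
`[0, π]`, where `cos` is injective, so two points with the same image satisfy
`|θ - φ| ≤ |a sin θ - b sin φ| ≤ |a - b| + |θ - φ| / 2`, whence `|x - y| ≤ 2 |a - b|`.
In `g_α` the step sizes are `α ∂R`, and the partial derivatives of `R` are locally Lipschitz
(`erf` is smooth and `∂ζ/∂t` is a Gaussian average of a Lipschitz function), hence bounded and
`K`-Lipschitz on the compact square. So `g_α p = g_α q` gives `‖p - q‖ ≤ 2αK ‖p - q‖`, which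
forces `p = q` once `2αK < 1`.
-/

noncomputable def erfDeriv (u : ℝ) : ℝ := 2 / √π * exp (-u ^ 2)

lemma two_div_sqrt_pi_le_two : 2 / √π ≤ 2 :=
  div_le_self zero_le_two (one_le_sqrt.2 (by linarith [pi_gt_three]))

lemma hasDerivAt_erf (u : ℝ) : HasDerivAt erf (erfDeriv u) u := by
  have hc : Continuous fun r : ℝ => exp (-r ^ 2) := by fun_prop
  exact (intervalIntegral.integral_hasDerivAt_right (hc.intervalIntegrable 0 u)
    (hc.stronglyMeasurableAtFilter _ _) hc.continuousAt).const_mul (2 / √π)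

lemma contDiff_erf : ContDiff ℝ 1 erf := by
  rw [contDiff_one_iff_deriv,
    show deriv erf = erfDeriv from funext fun u => (hasDerivAt_erf u).deriv]
  exact ⟨fun u => (hasDerivAt_erf u).differentiableAt, by unfold erfDeriv; fun_prop⟩

lemma abs_erf_le (u : ℝ) : |erf u| ≤ 2 := by
  have hint : |∫ r in (0 : ℝ)..u, exp (-r ^ 2)| ≤ √π :=
    calc |∫ r in (0 : ℝ)..u, exp (-r ^ 2)| = ‖∫ r in (0 : ℝ)..u, exp (-r ^ 2)‖ := rfl
      _ ≤ ∫ r in uIoc 0 u, ‖exp (-r ^ 2)‖ := intervalIntegral.norm_integral_le_integral_norm_uIoc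
      _ ≤ ∫ r, exp (-r ^ 2) := by
          simp only [norm_of_nonneg (exp_pos _).le]
          exact setIntegral_le_integral (by simpa using integrable_exp_neg_mul_sq one_pos)
            (ae_of_all _ fun r => (exp_pos _).le)
      _ = √π := by simpa using integral_gaussian 1
  rw [erf, abs_mul, abs_of_pos (by positivity)]
  calc 2 / √π * |∫ r in (0 : ℝ)..u, exp (-r ^ 2)| ≤ 2 / √π * √π := by gcongr
    _ = 2 := div_mul_cancel₀ _ (sqrt_pos.2 pi_pos).ne'

lemma abs_erfDeriv_le (u : ℝ) : |erfDeriv u| ≤ 2 := by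
  rw [erfDeriv, abs_of_pos (by positivity)]
  calc 2 / √π * exp (-u ^ 2) ≤ 2 / √π * 1 := by
        gcongr; exact exp_le_one_iff.2 (neg_nonpos.2 (sq_nonneg u))
    _ ≤ 2 := by simpa using two_div_sqrt_pi_le_two

lemma hasDerivAt_erfDeriv (u : ℝ) : HasDerivAt erfDeriv (-(2 * u) * erfDeriv u) u := by
  refine (((hasDerivAt_pow 2 u).neg.exp).const_mul (2 / √π)).congr_deriv ?_
  simp only [erfDeriv, Pi.neg_apply]; ring

lemma abs_mul_erfDeriv_le (u : ℝ) : |u * erfDeriv u| ≤ 2 := by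
  have h := abs_mulExpNegMulSq_one_le_one u
  rw [mulExpNegSq_apply, one_mul, ← sq] at h
  rw [erfDeriv, mul_left_comm, abs_mul, abs_of_pos (by positivity)]
  calc 2 / √π * |u * exp (-u ^ 2)| ≤ 2 * 1 := by gcongr; exact two_div_sqrt_pi_le_two
    _ = 2 := mul_one 2

noncomputable def erfSqDeriv (u : ℝ) : ℝ := 2 * erf u * erfDeriv u

lemma hasDerivAt_erf_sq (u : ℝ) : HasDerivAt (fun t => erf t ^ 2) (erfSqDeriv u) u := by
  refine ((hasDerivAt_erf u).pow 2).congr_deriv ?_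
  simp only [erfSqDeriv]; ring

lemma continuous_erfSqDeriv : Continuous erfSqDeriv := by
  have := contDiff_erf.continuous
  unfold erfSqDeriv erfDeriv; fun_prop

lemma abs_erfSqDeriv_le (u : ℝ) : |erfSqDeriv u| ≤ 8 := by
  rw [erfSqDeriv, abs_mul, abs_mul, abs_two]
  nlinarith [abs_erf_le u, abs_erfDeriv_le u, abs_nonneg (erf u), abs_nonneg (erfDeriv u)]

lemma lipschitzWith_erfSqDeriv : LipschitzWith 24 erfSqDeriv := by
  have hd (u : ℝ) : HasDerivAt erfSqDeriv
      (2 * (erfDeriv u * erfDeriv u + erf u * (-(2 * u) * erfDeriv u))) u := by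
    refine (((hasDerivAt_erf u).const_mul 2).mul (hasDerivAt_erfDeriv u)).congr_deriv ?_
    ring
  refine lipschitzWith_of_nnnorm_deriv_le (fun u => (hd u).differentiableAt) fun u => ?_
  rw [(hd u).deriv, ← NNReal.coe_le_coe, coe_nnnorm, norm_eq_abs]
  have h1 := abs_erfDeriv_le u
  have h2 := abs_erf_le u
  have h3 : |-(2 * u) * erfDeriv u| ≤ 4 := by
    rw [neg_mul, abs_neg, mul_assoc, abs_mul, abs_two]; linarith [abs_mul_erfDeriv_le u]
  calc |2 * (erfDeriv u * erfDeriv u + erf u * (-(2 * u) * erfDeriv u))|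
      ≤ 2 * (|erfDeriv u| * |erfDeriv u| + |erf u| * |-(2 * u) * erfDeriv u|) := by
        rw [abs_mul, abs_two, ← abs_mul, ← abs_mul]; gcongr; exact abs_add_le _ _
    _ ≤ 2 * (2 * 2 + 2 * 4) := by gcongr
    _ = 24 := by norm_num

section IntegralCompAdd

variable {μ : Measure ℝ} {h h' : ℝ → ℝ} {B C : ℝ}

lemma integrable_comp_add [IsFiniteMeasure μ] (hc : Continuous h) (hB : ∀ x, |h x| ≤ B)
    (t : ℝ) : Integrable (fun g => h (t + g)) μ :=
  .of_bound (by fun_prop : Continuous fun g => h (t + g)).aestronglyMeasurable B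
    (ae_of_all _ fun g => hB (t + g))

lemma hasDerivAt_integral_comp_add [IsFiniteMeasure μ] (hh : ∀ x, HasDerivAt h (h' x) x)
    (hB : ∀ x, |h x| ≤ B) (hc' : Continuous h') (hC : ∀ x, |h' x| ≤ C) (t : ℝ) :
    HasDerivAt (fun t => ∫ g, h (t + g) ∂μ) (∫ g, h' (t + g) ∂μ) t :=
  have hc : Continuous h := continuous_iff_continuousAt.2 fun x => (hh x).continuousAt
  (hasDerivAt_integral_of_dominated_loc_of_deriv_le (bound := fun _ => C) Filter.univ_mem
    (.of_forall fun x => (by fun_prop : Continuous fun g => h (x + g)).aestronglyMeasurable)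
    (integrable_comp_add hc hB t)
    (by fun_prop : Continuous fun g => h' (t + g)).aestronglyMeasurable
    (ae_of_all _ fun g x _ => hC (x + g)) (integrable_const C)
    (ae_of_all _ fun g x _ => (hh (x + g)).comp_add_const x g)).2

lemma lipschitzWith_integral_comp_add [IsProbabilityMeasure μ] {K : NNReal}
    (hh : LipschitzWith K h) (hB : ∀ x, |h x| ≤ B) :
    LipschitzWith K (fun t => ∫ g, h (t + g) ∂μ) := by
  refine .of_dist_le_mul fun s t => ?_
  rw [dist_eq_norm, ← integral_sub (integrable_comp_add hh.continuous hB s)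
    (integrable_comp_add hh.continuous hB t)]
  have := norm_integral_le_of_norm_le_const (μ := μ) (f := fun g => h (s + g) - h (t + g))
    (C := K * dist s t) (ae_of_all _ fun g => by
      simpa [dist_eq_norm] using hh.dist_le_mul (s + g) (t + g))
  simpa using this

end IntegralCompAdd

noncomputable def zetaDeriv (t s : ℝ) : ℝ := ∫ g, erfSqDeriv (t + g) ∂gaussianReal 0 s.toNNReal

lemma hasDerivAt_zeta (t s : ℝ) : HasDerivAt (fun t => zeta t s) (zetaDeriv t s) t :=
  hasDerivAt_integral_comp_add (B := 4) hasDerivAt_erf_sq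
    (fun u => by rw [abs_pow]; nlinarith [abs_erf_le u, abs_nonneg (erf u)])
    continuous_erfSqDeriv abs_erfSqDeriv_le t

lemma lipschitzWith_zetaDeriv (s : ℝ) : LipschitzWith 24 fun t => zetaDeriv t s :=
  lipschitzWith_integral_comp_add lipschitzWith_erfSqDeriv abs_erfSqDeriv_le

section ReducedRisk

variable (d L : ℕ) (γ lam ε : ℝ)

lemma hasDerivAt_Rred_snd (κ ν : ℝ) :
    HasDerivAt (fun y => Rred d L γ lam ε κ y)
      (-(2 * γ ^ 2 * erf (lam * √(d / 2) * κ / √(1 + 2 * lam ^ 2 * γ ^ 2)))) ν :=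
  (((((hasDerivAt_id ν).const_mul (2 * γ ^ 2)).mul_const _).const_sub _).add_const _
    |>.add_const _ |>.add_const _).congr_deriv (by ring)

lemma hasDerivAt_Rred_fst (κ ν : ℝ) :
    HasDerivAt (fun x => Rred d L γ lam ε x ν)
      (-(2 * γ ^ 2 * ν * (erfDeriv (lam * √(d / 2) * κ / √(1 + 2 * lam ^ 2 * γ ^ 2))
          * (lam * √(d / 2) / √(1 + 2 * lam ^ 2 * γ ^ 2))))
        + γ ^ 2 * (zetaDeriv (lam * √(d / 2) * κ) (lam ^ 2 * γ ^ 2) * (lam * √(d / 2)))) κ := by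
  have herf := (hasDerivAt_erf _).comp κ (((hasDerivAt_id κ).const_mul (lam * √(d / 2))).div_const
    √(1 + 2 * lam ^ 2 * γ ^ 2))
  have hzeta := (hasDerivAt_zeta _ (lam ^ 2 * γ ^ 2)).comp κ
    ((hasDerivAt_id κ).const_mul (lam * √(d / 2)))
  simp only [id, mul_one] at herf hzeta
  exact (((herf.const_mul (2 * γ ^ 2 * ν)).const_sub _).add (hzeta.const_mul _)).add_const _
    |>.add_const _

lemma locallyLipschitz_dvR : LocallyLipschitz fun p : ℝ × ℝ => dvR d L γ lam ε p.1 p.2 := by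
  have hdvR : (fun p : ℝ × ℝ => dvR d L γ lam ε p.1 p.2) =
      fun p => -(2 * γ ^ 2 * erf (lam * √(d / 2) * p.1 / √(1 + 2 * lam ^ 2 * γ ^ 2))) :=
    funext fun p => (hasDerivAt_Rred_snd d L γ lam ε p.1 p.2).deriv
  rw [hdvR]
  have := contDiff_erf
  exact ContDiff.locallyLipschitz (𝕂 := ℝ) (by fun_prop)

lemma locallyLipschitz_dkR : LocallyLipschitz fun p : ℝ × ℝ => dkR d L γ lam ε p.1 p.2 := by
  set A := lam * √(d / 2)
  set S := √(1 + 2 * lam ^ 2 * γ ^ 2)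
  have hdkR : (fun p : ℝ × ℝ => dkR d L γ lam ε p.1 p.2) = fun p =>
      -(2 * γ ^ 2 * p.2 * (erfDeriv (A * p.1 / S) * (A / S)))
        + γ ^ 2 * (zetaDeriv (A * p.1) (lam ^ 2 * γ ^ 2) * A) :=
    funext fun p => (hasDerivAt_Rred_fst d L γ lam ε p.1 p.2).deriv
  rw [hdkR]
  refine .add (ContDiff.locallyLipschitz (𝕂 := ℝ) (by unfold erfDeriv; fun_prop)) ?_
  have hzeta : LocallyLipschitz fun p : ℝ × ℝ => zetaDeriv (A * p.1) (lam ^ 2 * γ ^ 2) :=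
    (lipschitzWith_zetaDeriv _).locallyLipschitz.comp
      (ContDiff.locallyLipschitz (𝕂 := ℝ) (by fun_prop))
  exact LocallyLipschitz.comp (f := fun z => γ ^ 2 * (z * A))
    (ContDiff.locallyLipschitz (𝕂 := ℝ) (by fun_prop)) hzeta

end ReducedRisk

noncomputable def pgdCoord (x a : ℝ) : ℝ := (x - a * (1 - x ^ 2)) / √(1 + a ^ 2 * (1 - x ^ 2))

lemma pgdCoord_cos (θ a : ℝ) : pgdCoord (cos θ) a = cos (θ + arctan (a * sin θ)) := by
  rw [pgdCoord, cos_add, cos_arctan, sin_arctan, ← sin_sq, mul_pow]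
  ring

lemma abs_arctan_sub_arctan_le (x y : ℝ) : |arctan x - arctan y| ≤ |x - y| := by
  have hlip : LipschitzWith 1 arctan :=
    lipschitzWith_of_nnnorm_deriv_le differentiable_arctan fun x => by
      rw [Real.deriv_arctan, ← NNReal.coe_le_coe, coe_nnnorm, norm_eq_abs, NNReal.coe_one,
        abs_of_pos (by positivity)]
      exact div_le_one_of_le₀ (by nlinarith [sq_nonneg x]) (by positivity)
  simpa [dist_eq] using hlip.dist_le_mul x y

lemma add_arctan_mul_sin_mem_Icc {θ a : ℝ} (hθ : θ ∈ Icc 0 π) (ha : |a| ≤ 1) :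
    θ + arctan (a * sin θ) ∈ Icc 0 π := by
  have hsin : 0 ≤ sin θ := sin_nonneg_of_nonneg_of_le_pi hθ.1 hθ.2
  have harctan : |arctan (a * sin θ)| ≤ sin θ :=
    calc |arctan (a * sin θ)| ≤ |a * sin θ| := by
          simpa using abs_arctan_sub_arctan_le (a * sin θ) 0
      _ ≤ sin θ := by rw [abs_mul, abs_of_nonneg hsin]; nlinarith [abs_nonneg a]
  have h0 : sin θ ≤ θ := sin_le hθ.1
  have hπ : sin θ ≤ π - θ := by simpa [sin_pi_sub] using sin_le (sub_nonneg.2 hθ.2)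
  constructor <;> linarith [abs_le.1 harctan]

lemma abs_sub_le_of_pgdCoord_eq {x y a b : ℝ} (hx : x ∈ Icc (-1) 1) (hy : y ∈ Icc (-1) 1)
    (ha : |a| ≤ 1 / 2) (hb : |b| ≤ 1 / 2) (h : pgdCoord x a = pgdCoord y b) :
    |x - y| ≤ 2 * |a - b| := by
  obtain ⟨θ, hθ, rfl⟩ : ∃ θ ∈ Icc 0 π, cos θ = x :=
    ⟨arccos x, ⟨arccos_nonneg x, arccos_le_pi x⟩, cos_arccos hx.1 hx.2⟩
  obtain ⟨φ, hφ, rfl⟩ : ∃ φ ∈ Icc 0 π, cos φ = y :=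
    ⟨arccos y, ⟨arccos_nonneg y, arccos_le_pi y⟩, cos_arccos hy.1 hy.2⟩
  rw [pgdCoord_cos, pgdCoord_cos] at h
  have hangle : θ + arctan (a * sin θ) = φ + arctan (b * sin φ) :=
    injOn_cos (add_arctan_mul_sin_mem_Icc hθ (by linarith))
      (add_arctan_mul_sin_mem_Icc hφ (by linarith)) h
  have hsin : |a * sin θ - b * sin φ| ≤ |a - b| + |θ - φ| / 2 :=
    calc |a * sin θ - b * sin φ| = |(a - b) * sin θ + b * (sin θ - sin φ)| := by ring_nf
      _ ≤ |a - b| * |sin θ| + |b| * |sin θ - sin φ| := by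
          rw [← abs_mul, ← abs_mul]; exact abs_add_le _ _
      _ ≤ |a - b| * 1 + 1 / 2 * |θ - φ| :=
          add_le_add (mul_le_mul_of_nonneg_left (abs_sin_le_one θ) (abs_nonneg _))
            (mul_le_mul hb (abs_sin_sub_sin_le θ φ) (abs_nonneg _) (by norm_num))
      _ = |a - b| + |θ - φ| / 2 := by ring
  have hθφ : |θ - φ| ≤ |a * sin θ - b * sin φ| := by
    rw [show θ - φ = arctan (b * sin φ) - arctan (a * sin θ) by linarith, abs_sub_comm (a * sin θ)]
    exact abs_arctan_sub_arctan_le _ _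
  calc |cos θ - cos φ| ≤ |θ - φ| := abs_cos_sub_cos_le θ φ
    _ ≤ 2 * |a - b| := by linarith

theorem exists_pos_injOn_pgdCoord {H : ℝ × ℝ → ℝ × ℝ} (hH : LocallyLipschitzOn sqIcc H) :
    ∃ abar : ℝ, 0 < abar ∧ ∀ α : ℝ, 0 < α → α ≤ abar →
      InjOn (fun p => (pgdCoord p.1 (α * (H p).1), pgdCoord p.2 (α * (H p).2))) sqIcc := by
  have hcpt : IsCompact sqIcc := isCompact_Icc.prod isCompact_Icc
  obtain ⟨K, hK⟩ := hH.exists_lipschitzOnWith_of_compact hcpt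
  obtain ⟨M, hM⟩ := hcpt.exists_bound_of_continuousOn hH.continuousOn
  refine ⟨1 / (2 * (|M| + K + 1)), by positivity, fun α hα hαle p hp q hq hpq => ?_⟩
  have hαM : 2 * α * (|M| + K + 1) ≤ 1 := by
    rw [le_div_iff₀ (by positivity)] at hαle; linarith
  have hstep (x y u v : ℝ) (hx : x ∈ Icc (-1) 1) (hy : y ∈ Icc (-1) 1) (hu : |u| ≤ ‖H p‖)
      (hv : |v| ≤ ‖H q‖) (huv : |u - v| ≤ dist (H p) (H q))
      (h : pgdCoord x (α * u) = pgdCoord y (α * v)) : |x - y| ≤ 2 * α * K * dist p q := by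
    have hsmall (w : ℝ) (hw : |w| ≤ M) : |α * w| ≤ 1 / 2 := by
      rw [abs_mul, abs_of_pos hα]
      nlinarith [le_abs_self M, abs_nonneg w, K.coe_nonneg]
    calc |x - y| ≤ 2 * |α * u - α * v| := abs_sub_le_of_pgdCoord_eq hx hy
          (hsmall u (hu.trans (hM p hp))) (hsmall v (hv.trans (hM q hq))) h
      _ = 2 * α * |u - v| := by rw [← mul_sub, abs_mul, abs_of_pos hα, mul_assoc]
      _ ≤ 2 * α * (K * dist p q) := by gcongr; exact huv.trans (hK.dist_le_mul p hp q hq)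
      _ = 2 * α * K * dist p q := by ring
  have hdist : dist (H p) (H q) = max |(H p).1 - (H q).1| |(H p).2 - (H q).2| := by
    rw [Prod.dist_eq, dist_eq, dist_eq]
  have hcontract : dist p q ≤ 2 * α * K * dist p q := by
    rw [Prod.dist_eq, dist_eq, dist_eq]
    exact max_le
      (hstep _ _ _ _ hp.1 hq.1 (norm_fst_le (H p)) (norm_fst_le (H q)) (hdist ▸ le_max_left _ _)
        (congrArg Prod.fst hpq))
      (hstep _ _ _ _ hp.2 hq.2 (norm_snd_le (H p)) (norm_snd_le (H q)) (hdist ▸ le_max_right _ _)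
        (congrArg Prod.snd hpq))
  have hK1 : 2 * α * K < 1 := by nlinarith [abs_nonneg M]
  have : dist p q ≤ 0 := by nlinarith [dist_nonneg (x := p) (y := q)]
  exact dist_le_zero.1 this

theorem stmt11_general (d L : ℕ) (γ lam ε : ℝ) :
    ∃ abar : ℝ, 0 < abar ∧ ∀ α : ℝ, 0 < α → α ≤ abar →
      Set.InjOn (pgd d L γ lam ε α) sqIcc := by
  have hgrad := (locallyLipschitz_dkR d L γ lam ε).prodMk (locallyLipschitz_dvR d L γ lam ε)
  obtain ⟨abar, habar, hinj⟩ := exists_pos_injOn_pgdCoord hgrad.locallyLipschitzOn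
  refine ⟨abar, habar, fun α hα hαle => ?_⟩
  have hpgd : pgd d L γ lam ε α = fun p => (pgdCoord p.1 (α * dkR d L γ lam ε p.1 p.2),
      pgdCoord p.2 (α * dvR d L γ lam ε p.1 p.2)) := by
    funext p; simp only [pgd, pgdCoord, mul_pow]
  rw [hpgd]
  exact hinj α hα hαle

/-- For small enough step size, the PGD map `g_α` is injective on `[−1,1]²`. -/
theorem stmt11 (d L : ℕ) (hd : 1 ≤ d) (hL : 1 ≤ L) (γ lam ε : ℝ)
    (hγ : 0 < γ) (hlam : 0 < lam) (hε : 0 ≤ ε) :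
    ∃ abar : ℝ, 0 < abar ∧ ∀ α : ℝ, 0 < α → α ≤ abar →
      Set.InjOn (pgd d L γ lam ε α) sqIcc :=
  stmt11_general d L γ lam ε
end

section
/- Let γ > 0 and t ∈ ℝ, and let G be a centered real Gaussian random variable with variance γ². Then E[ erf(t + G)·erf′(t + G) ] = (1/√(1 + 2γ²))·erf( t / √((1 + 4γ²)(1 + 2γ²)) )·erf′( t / √(1 + 2γ²) ), where erf′(u) = (2/√π)·exp(−u²). -/
open MeasureTheory ProbabilityTheory Real
open scoped NNReal

/-- The derivative of `erf`. -/
noncomputable def erf' (u : ℝ) : ℝ := 2 / Real.sqrt Real.pi * Real.exp (-u ^ 2)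

/-!
Substituting `r = u s` gives `erf u = (2/√π) ∫₀¹ u e^{-u²s²} ds`, so `erf X · erf′ X` is
`(4/π) ∫₀¹ X e^{-(1+s²)X²} ds`. For `X ~ N(t, v)` the weight `e^{-aX²}` merely tilts the law into
the Gaussian `N(t/(1+2av), v/(1+2av))` (complete the square), which gives
`E[X e^{-aX²}] = e^{-at²/(1+2av)} (1+2av)^{-1/2} t/(1+2av)`. With `a = 1 + s²` and `A = 1 + 2v`
the `s`-integrand becomes `erf′(t/√A)/√A` times the derivative of `s ↦ erf (t s/√(A(A+2vs²)))`,
and the fundamental theorem of calculus finishes the computation.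
-/

lemma erf_eq_integral_erf' (u : ℝ) : erf u = ∫ r in (0:ℝ)..u, erf' r := by
  simp only [erf, erf', intervalIntegral.integral_const_mul]

lemma continuous_erf' : Continuous erf' := by
  unfold erf'; fun_prop

lemma continuous_erf : Continuous erf := by
  rw [funext erf_eq_integral_erf']
  exact intervalIntegral.continuous_primitive (fun a b => continuous_erf'.intervalIntegrable a b) 0

lemma erf_eq_integral_unitInterval (u : ℝ) :
    erf u = 2 / √π * ∫ s in (0:ℝ)..1, u * exp (-(u * s) ^ 2) := by
  rw [intervalIntegral.integral_const_mul, ← smul_eq_mul (a := u),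
    intervalIntegral.smul_integral_comp_mul_left (fun r => exp (-r ^ 2)), mul_zero, mul_one, erf]

lemma two_div_sqrt_pi_mul_self : 2 / √π * (2 / √π) = 4 / π := by
  rw [div_mul_div_comm, mul_self_sqrt pi_pos.le]
  norm_num

lemma erf_mul_erf'_eq_integral (u : ℝ) :
    erf u * erf' u = 4 / π * ∫ s in (0:ℝ)..1, u * exp (-((1 + s ^ 2) * u ^ 2)) := by
  rw [erf_eq_integral_unitInterval, erf', mul_mul_mul_comm, two_div_sqrt_pi_mul_self,
    ← intervalIntegral.integral_mul_const]
  congr 1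
  refine intervalIntegral.integral_congr fun s _ => ?_
  rw [mul_assoc, ← exp_add]
  ring_nf

lemma gaussianPDFReal_mul_exp_neg_mul_sq (μ a x : ℝ) {v : ℝ≥0} (hv : v ≠ 0)
    (hB : 0 < 1 + 2 * a * v) :
    gaussianPDFReal μ v x * exp (-(a * x ^ 2)) =
      exp (-(a * μ ^ 2 / (1 + 2 * a * v))) / √(1 + 2 * a * v) *
        gaussianPDFReal (μ / (1 + 2 * a * v)) (v / (1 + 2 * a * v)).toNNReal x := by
  have hv' : (0 : ℝ) < v := by positivity
  set B := 1 + 2 * a * v with hBdef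
  have hsqrt : √(2 * π * (v / B)) = √(2 * π * v) / √B := by
    rw [← sqrt_div' _ hB.le, mul_div_assoc]
  have hexp : -(x - μ) ^ 2 / (2 * v) + -(a * x ^ 2)
      = -(a * μ ^ 2 / B) + -(x - μ / B) ^ 2 / (2 * (v / B)) := by
    have hBne : B ≠ 0 := hB.ne'
    field_simp
    rw [hBdef]
    ring
  rw [gaussianPDFReal_def, gaussianPDFReal_def]
  simp only [coe_toNNReal _ (div_pos hv' hB).le, hsqrt]
  rw [mul_assoc, ← exp_add, hexp, exp_add]
  have : √B ≠ 0 := (sqrt_pos.2 hB).ne'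
  field_simp

lemma integral_mul_exp_neg_mul_sq_gaussianReal (μ a : ℝ) (v : ℝ≥0) (hB : 0 < 1 + 2 * a * v) :
    ∫ x, x * exp (-(a * x ^ 2)) ∂gaussianReal μ v =
      exp (-(a * μ ^ 2 / (1 + 2 * a * v))) / √(1 + 2 * a * v) * (μ / (1 + 2 * a * v)) := by
  rcases eq_or_ne v 0 with rfl | hv
  · simp [gaussianReal_zero_var, mul_comm]
  have hw : (v / (1 + 2 * a * v)).toNNReal ≠ 0 := by
    simp only [ne_eq, toNNReal_eq_zero, not_le]; positivity
  calc ∫ x, x * exp (-(a * x ^ 2)) ∂gaussianReal μ v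
      = ∫ x, gaussianPDFReal μ v x * exp (-(a * x ^ 2)) * x := by
        rw [integral_gaussianReal_eq_integral_smul hv]
        congr with x
        rw [smul_eq_mul]; ring
    _ = exp (-(a * μ ^ 2 / (1 + 2 * a * v))) / √(1 + 2 * a * v) *
          ∫ x, gaussianPDFReal (μ / (1 + 2 * a * v)) (v / (1 + 2 * a * v)).toNNReal x • x := by
        simp_rw [gaussianPDFReal_mul_exp_neg_mul_sq μ a _ hv hB, mul_assoc, integral_const_mul,
          smul_eq_mul]
    _ = _ := by rw [← integral_gaussianReal_eq_integral_smul hw, integral_id_gaussianReal]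

lemma abs_mul_exp_neg_mul_sq_le_one {a : ℝ} (ha : 1 ≤ a) (x : ℝ) :
    |x| * exp (-(a * x ^ 2)) ≤ 1 := by
  rw [exp_neg, mul_inv_le_iff₀ (exp_pos _), one_mul]
  calc |x| ≤ a * x ^ 2 + 1 := by nlinarith [abs_nonneg x, sq_abs x, sq_nonneg (|x| - 1)]
    _ ≤ exp (a * x ^ 2) := add_one_le_exp _

lemma intervalIntegral_integral_mul_exp_neg_mul_sq_swap (μ : Measure ℝ) [IsFiniteMeasure μ] :
    ∫ s in (0:ℝ)..1, ∫ x, x * exp (-((1 + s ^ 2) * x ^ 2)) ∂μ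
      = ∫ x, (∫ s in (0:ℝ)..1, x * exp (-((1 + s ^ 2) * x ^ 2))) ∂μ := by
  have : IsFiniteMeasure (volume.restrict (Set.uIoc (0:ℝ) 1)) := ⟨by simp⟩
  refine intervalIntegral_integral_swap
    (Integrable.of_bound (Continuous.aestronglyMeasurable (by fun_prop)) 1 (ae_of_all _ ?_))
  rintro ⟨s, x⟩
  simpa using abs_mul_exp_neg_mul_sq_le_one (by nlinarith [sq_nonneg s] : 1 ≤ 1 + s ^ 2) x

lemma hasDerivAt_mul_div_sqrt_mul (t : ℝ) {A b s : ℝ} (hA : 0 < A) (hQ : 0 < A + b * s ^ 2) :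
    HasDerivAt (fun s => t * s / √(A * (A + b * s ^ 2)))
      (t * √A / ((A + b * s ^ 2) * √(A + b * s ^ 2))) s := by
  have hsA : √A ≠ 0 := (sqrt_pos.2 hA).ne'
  have hsQ : √(A + b * s ^ 2) ≠ 0 := (sqrt_pos.2 hQ).ne'
  have hfun : (fun s => t * s / √(A * (A + b * s ^ 2)))
      = fun s => t / √A * (s / √(A + b * s ^ 2)) := by
    funext s
    rw [sqrt_mul hA.le]
    ring
  have hsqrt : HasDerivAt (fun s => √(A + b * s ^ 2)) (b * s / √(A + b * s ^ 2)) s := by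
    refine (((hasDerivAt_pow 2 s).const_mul b).const_add A).sqrt hQ.ne' |>.congr_deriv ?_
    field_simp
    ring
  rw [hfun]
  refine (((hasDerivAt_id' s).div hsqrt hsQ).const_mul (t / √A)).congr_deriv ?_
  field_simp
  rw [sq_sqrt hQ.le, sq_sqrt hA.le]
  ring

lemma integral_erf'_comp_mul_deriv (t : ℝ) {A b : ℝ} (hA : 0 < A) (hb : 0 ≤ b) :
    ∫ s in (0:ℝ)..1, erf' (t * s / √(A * (A + b * s ^ 2)))
        * (t * √A / ((A + b * s ^ 2) * √(A + b * s ^ 2)))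
      = erf (t / √(A * (A + b))) := by
  have hQ : ∀ s : ℝ, 0 < A + b * s ^ 2 := fun s => by positivity
  have hcont : ContinuousOn (fun s => t * √A / ((A + b * s ^ 2) * √(A + b * s ^ 2)))
      (Set.uIcc 0 1) := by
    refine Continuous.continuousOn (continuous_const.div (by fun_prop) fun s => ?_)
    have := hQ s
    positivity
  have := intervalIntegral.integral_comp_mul_deriv
    (fun s _ => hasDerivAt_mul_div_sqrt_mul t hA (hQ s)) hcont continuous_erf'
  simp only [Function.comp_def, mul_zero, zero_div, one_pow, mul_one] at this
  rw [this, erf_eq_integral_erf']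

theorem integral_erf_mul_erf'_gaussianReal (t : ℝ) (v : ℝ≥0) :
    ∫ x, erf x * erf' x ∂gaussianReal t v
      = 1 / √(1 + 2 * v) * erf (t / √((1 + 4 * v) * (1 + 2 * v))) * erf' (t / √(1 + 2 * v)) := by
  set A : ℝ := 1 + 2 * v
  have hA : 0 < A := by positivity
  have hintegrand : ∀ s : ℝ, 4 / π * ∫ x, x * exp (-((1 + s ^ 2) * x ^ 2)) ∂gaussianReal t v
      = 1 / √A * erf' (t / √A) * (erf' (t * s / √(A * (A + 2 * v * s ^ 2)))
          * (t * √A / ((A + 2 * v * s ^ 2) * √(A + 2 * v * s ^ 2)))) := by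
    intro s
    have hQ : 1 + 2 * (1 + s ^ 2) * v = A + 2 * v * s ^ 2 := by ring
    have hQpos : 0 < A + 2 * v * s ^ 2 := by positivity
    rw [integral_mul_exp_neg_mul_sq_gaussianReal _ _ _ (by positivity), hQ]
    have hsA : √A ≠ 0 := (sqrt_pos.2 hA).ne'
    have hsQ : √(A + 2 * v * s ^ 2) ≠ 0 := (sqrt_pos.2 hQpos).ne'
    have hexp : exp (-((1 + s ^ 2) * t ^ 2 / (A + 2 * v * s ^ 2)))
        = exp (-(t / √A) ^ 2) * exp (-(t * s / √(A * (A + 2 * v * s ^ 2))) ^ 2) := by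
      rw [← exp_add, div_pow, div_pow, sq_sqrt hA.le, sq_sqrt (by positivity)]
      congr 1
      field_simp
      ring
    rw [hexp, erf', erf', ← two_div_sqrt_pi_mul_self]
    field_simp
  calc ∫ x, erf x * erf' x ∂gaussianReal t v
      = 4 / π * ∫ s in (0:ℝ)..1, ∫ x, x * exp (-((1 + s ^ 2) * x ^ 2)) ∂gaussianReal t v := by
        simp_rw [erf_mul_erf'_eq_integral]
        rw [integral_const_mul, intervalIntegral_integral_mul_exp_neg_mul_sq_swap]
    _ = ∫ s in (0:ℝ)..1, 1 / √A * erf' (t / √A) * (erf' (t * s / √(A * (A + 2 * v * s ^ 2)))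
          * (t * √A / ((A + 2 * v * s ^ 2) * √(A + 2 * v * s ^ 2)))) := by
        rw [← intervalIntegral.integral_const_mul]
        simp_rw [hintegrand]
    _ = 1 / √A * erf' (t / √A) * erf (t / √(A * (A + 2 * v))) := by
        rw [intervalIntegral.integral_const_mul, integral_erf'_comp_mul_deriv t hA (by positivity)]
    _ = _ := by
        rw [show (1 + 4 * (v : ℝ)) * (1 + 2 * v) = A * (A + 2 * v) by ring]
        ring

theorem stmt19_general (γ t : ℝ)
    {Ω : Type*} [MeasurableSpace Ω] (P : Measure Ω)
    (G : Ω → ℝ)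
    (hG : Measure.map G P = gaussianReal 0 (γ ^ 2).toNNReal) :
    ∫ ω, erf (t + G ω) * erf' (t + G ω) ∂P
      = 1 / Real.sqrt (1 + 2 * γ ^ 2)
          * erf (t / Real.sqrt ((1 + 4 * γ ^ 2) * (1 + 2 * γ ^ 2)))
          * erf' (t / Real.sqrt (1 + 2 * γ ^ 2)) := by
  have hG_law : HasLaw G (gaussianReal 0 (γ ^ 2).toNNReal) P :=
    ⟨.of_map_ne_zero (hG ▸ IsProbabilityMeasure.ne_zero _), hG⟩
  have hshift :
      HasLaw (t + ·) (gaussianReal t (γ ^ 2).toNNReal) (gaussianReal 0 (γ ^ 2).toNNReal) :=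
    ⟨by fun_prop, by rw [gaussianReal_map_const_add, zero_add]⟩
  rw [← coe_toNNReal _ (sq_nonneg γ), ← integral_erf_mul_erf'_gaussianReal]
  exact (hshift.fun_comp hG_law).integral_comp (f := fun x => erf x * erf' x)
    (continuous_erf.mul continuous_erf').aestronglyMeasurable

/-- For a centered Gaussian `G` with variance `γ²`,
`E[erf(t+G)·erf′(t+G)] = (1/√(1+2γ²))·erf(t/√((1+4γ²)(1+2γ²)))·erf′(t/√(1+2γ²))`. -/
theorem stmt19 (γ t : ℝ) (hγ : 0 < γ)
    {Ω : Type*} [MeasurableSpace Ω] (P : Measure Ω) [IsProbabilityMeasure P]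
    (G : Ω → ℝ) (hGmeas : Measurable G)
    (hG : Measure.map G P = gaussianReal 0 (γ ^ 2).toNNReal) :
    ∫ ω, erf (t + G ω) * erf' (t + G ω) ∂P
      = 1 / Real.sqrt (1 + 2 * γ ^ 2)
          * erf (t / Real.sqrt ((1 + 4 * γ ^ 2) * (1 + 2 * γ ^ 2)))
          * erf' (t / Real.sqrt (1 + 2 * γ ^ 2)) :=
  stmt19_general γ t P G hG
end
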